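/- arXiv:2205.08797 — 3 statements merged into one kernel-verified Lean document; each statement's English description precedes it below -/
import Mathlib

section
/- The Cartan invariant satisfies the cocycle relation: for four points p, q, r, s on the null cone (pairwise non-proportional), 𝔸(p,q,r) − 𝔸(p,q,s) + 𝔸(p,r,s) − 𝔸(q,r,s) = 0 (modulo 2π). -/
open Matrix Complex

noncomputable section

abbrev C3 := Fin 3 → ℂ

/-- Hermitian form ⟨X,Y⟩ = Yᴴ J X. -/
def herm (J : Matrix (Fin 3) (Fin 3) ℂ) (X Y : C3) : ℂ :=
  star Y ⬝ᵥ J.mulVec X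

/-- Box product a ⊠ b = conj(J⁻¹ (a × b)). -/
def box (J : Matrix (Fin 3) (Fin 3) ℂ) (a b : C3) : C3 :=
  star (J⁻¹.mulVec (crossProduct a b))

def J3 : Matrix (Fin 3) (Fin 3) ℂ := !![1,0,0;0,1,0;0,0,-1]

def HS : Matrix (Fin 3) (Fin 3) ℂ := !![0,0,1;0,2,0;1,0,0]

def cartan (J : Matrix (Fin 3) (Fin 3) ℂ) (p q r : C3) : ℝ :=
  (-(herm J p q * herm J q r * herm J r p)).arg

def heisPt (z : ℂ) (t : ℝ) : C3 := ![(-(Complex.normSq z) : ℝ) + (t : ℂ) * Complex.I, z, 1]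

def realVec (v : Fin 3 → ℝ) : C3 := fun i => (v i : ℂ)

/-! Since `⟨x, y⟩⟨y, x⟩ = |⟨x, y⟩|²`, the product of the triple products of `(p,q,r)` and `(p,r,s)`
equals that of `(p,q,s)` and `(q,r,s)` times the positive real `|⟨p,r⟩|² / |⟨q,s⟩|²`; taking arguments
gives the cocycle relation, provided all six products `⟨x, y⟩` are nonzero. That holds because in
signature `(2,1)` two orthogonal null vectors are proportional. -/

open ComplexConjugate

section Hermitian

variable {J : Matrix (Fin 3) (Fin 3) ℂ}

lemma herm_swap (hJ : J.IsHermitian) (x y : C3) : herm J y x = conj (herm J x y) := by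
  unfold herm
  conv_rhs => rw [← star_def, star_dotProduct, star_star, star_mulVec, hJ.eq, ← dotProduct_mulVec]

lemma herm_mul_herm_swap (hJ : J.IsHermitian) (x y : C3) :
    herm J x y * herm J y x = (normSq (herm J x y) : ℂ) := by
  rw [herm_swap hJ x y, mul_conj]

lemma herm_swap_ne_zero (hJ : J.IsHermitian) {x y : C3} (hxy : herm J x y ≠ 0) :
    herm J y x ≠ 0 := by
  rwa [herm_swap hJ, map_ne_zero]

lemma herm_sub_smul_self (x y : C3) (c : ℂ) :
    herm J (y - c • x) (y - c • x)
      = herm J y y - c * herm J x y - conj c * herm J y x + c * conj c * herm J x x := by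
  simp only [herm, mulVec_sub, mulVec_smul, star_sub, star_smul, sub_dotProduct, dotProduct_sub,
    smul_dotProduct, dotProduct_smul, smul_eq_mul, star_def]
  ring

theorem coe_cartan_cocycle (hJ : J.IsHermitian) {p q r s : C3}
    (hpq : herm J p q ≠ 0) (hpr : herm J p r ≠ 0) (hps : herm J p s ≠ 0)
    (hqr : herm J q r ≠ 0) (hqs : herm J q s ≠ 0) (hrs : herm J r s ≠ 0) :
    ((cartan J p q r - cartan J p q s + cartan J p r s - cartan J q r s : ℝ) : Real.Angle) = 0 := by
  have hrp := herm_swap_ne_zero hJ hpr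
  have hsp := herm_swap_ne_zero hJ hps
  have hsq := herm_swap_ne_zero hJ hqs
  have key : -(herm J p q * herm J q r * herm J r p) * -(herm J p r * herm J r s * herm J s p)
        * (normSq (herm J q s) : ℂ)
      = -(herm J p q * herm J q s * herm J s p) * -(herm J q r * herm J r s * herm J s q)
        * (normSq (herm J p r) : ℂ) := by
    rw [← herm_mul_herm_swap hJ, ← herm_mul_herm_swap hJ]
    ring
  have hangle := congrArg (fun z : ℂ => (arg z : Real.Angle)) key
  simp only [arg_mul_real (normSq_pos.mpr hqs), arg_mul_real (normSq_pos.mpr hpr)] at hangle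
  rw [arg_mul_coe_angle (by simp [*]) (by simp [*]),
    arg_mul_coe_angle (by simp [*]) (by simp [*]), ← sub_eq_zero] at hangle
  simp only [cartan, Real.Angle.coe_sub, Real.Angle.coe_add]
  rw [← hangle]
  abel

end Hermitian

lemma isHermitian_J3 : J3.IsHermitian := by
  ext i j; fin_cases i <;> fin_cases j <;> simp [J3]

lemma herm_J3_self (w : C3) : herm J3 w w = normSq (w 0) + normSq (w 1) - normSq (w 2) := by
  simp [herm, J3, mulVec, dotProduct, Fin.sum_univ_three, normSq_eq_conj_mul_self, sub_eq_add_neg]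

lemma eq_zero_of_herm_J3_self_eq_zero {w : C3} (hw : herm J3 w w = 0) (h2 : w 2 = 0) : w = 0 := by
  rw [herm_J3_self, h2, map_zero, ofReal_zero, sub_zero] at hw
  have hsum : normSq (w 0) + normSq (w 1) = 0 := by exact_mod_cast hw
  have h0 : w 0 = 0 := normSq_eq_zero.mp (by linarith [normSq_nonneg (w 0), normSq_nonneg (w 1)])
  have h1 : w 1 = 0 := normSq_eq_zero.mp (by linarith [normSq_nonneg (w 0), normSq_nonneg (w 1)])
  ext i; fin_cases i <;> assumption

-- `y - (y₂ / x₂) • x` is null and has vanishing last coordinate.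
lemma exists_smul_eq_of_herm_J3_eq_zero {x y : C3} (hx : x ≠ 0) (hxx : herm J3 x x = 0)
    (hyy : herm J3 y y = 0) (hxy : herm J3 x y = 0) : ∃ l : ℂ, y = l • x := by
  have hx2 : x 2 ≠ 0 := fun h => hx (eq_zero_of_herm_J3_self_eq_zero hxx h)
  refine ⟨y 2 / x 2, sub_eq_zero.mp (eq_zero_of_herm_J3_self_eq_zero ?_ ?_)⟩
  · rw [herm_sub_smul_self, hyy, hxx, hxy, herm_swap isHermitian_J3, hxy]
    simp
  · simp [hx2]

lemma herm_J3_ne_zero {x y : C3} (hx : x ≠ 0) (hxx : herm J3 x x = 0)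
    (hyy : herm J3 y y = 0) (hxy : ¬ ∃ l : ℂ, y = l • x) : herm J3 x y ≠ 0 :=
  fun h => hxy (exists_smul_eq_of_herm_J3_eq_zero hx hxx hyy h)

theorem stmt7_general (p q r s : C3) (hp : p ≠ 0) (hq : q ≠ 0) (hr : r ≠ 0)
    (hpp : herm J3 p p = 0) (hqq : herm J3 q q = 0) (hrr : herm J3 r r = 0)
    (hss : herm J3 s s = 0)
    (hpq : ¬ ∃ l : ℂ, q = l • p) (hpr : ¬ ∃ l : ℂ, r = l • p) (hps : ¬ ∃ l : ℂ, s = l • p)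
    (hqr : ¬ ∃ l : ℂ, r = l • q) (hqs : ¬ ∃ l : ℂ, s = l • q) (hrs : ¬ ∃ l : ℂ, s = l • r) :
    ∃ k : ℤ, cartan J3 p q r - cartan J3 p q s + cartan J3 p r s - cartan J3 q r s
      = 2 * Real.pi * k := by
  obtain ⟨k, hk⟩ := Real.Angle.coe_eq_zero_iff.mp <| coe_cartan_cocycle isHermitian_J3
    (herm_J3_ne_zero hp hpp hqq hpq) (herm_J3_ne_zero hp hpp hrr hpr)
    (herm_J3_ne_zero hp hpp hss hps) (herm_J3_ne_zero hq hqq hrr hqr)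
    (herm_J3_ne_zero hq hqq hss hqs) (herm_J3_ne_zero hr hrr hss hrs)
  exact ⟨k, by rw [← hk, zsmul_eq_mul, mul_comm]⟩

/-- The Cartan invariant satisfies the cocycle relation modulo 2π. -/
theorem stmt7 (p q r s : C3) (hp : p ≠ 0) (hq : q ≠ 0) (hr : r ≠ 0) (hs : s ≠ 0)
    (hpp : herm J3 p p = 0) (hqq : herm J3 q q = 0) (hrr : herm J3 r r = 0)
    (hss : herm J3 s s = 0)
    (hpq : ¬ ∃ l : ℂ, q = l • p) (hpr : ¬ ∃ l : ℂ, r = l • p) (hps : ¬ ∃ l : ℂ, s = l • p)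
    (hqr : ¬ ∃ l : ℂ, r = l • q) (hqs : ¬ ∃ l : ℂ, s = l • q) (hrs : ¬ ∃ l : ℂ, s = l • r) :
    ∃ k : ℤ, cartan J3 p q r - cartan J3 p q s + cartan J3 p r s - cartan J3 q r s
      = 2 * Real.pi * k :=
  stmt7_general p q r s hp hq hr hpp hqq hrr hss hpq hpr hps hqr hqs hrs
end
end

section
/- For two points x ≠ y outside the closed ball (i.e. positive-type points of ℂP²), the ℂ-circles polar to x and y intersect if and only if the point x ⊠ y lies on the null cone; in that case their intersection is exactly the projective point of x ⊠ y. -/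
open Matrix Complex

noncomputable section

lemma J3_inv : J3⁻¹ = J3 := by
  apply Matrix.inv_eq_right_inv
  ext i j
  fin_cases i <;> fin_cases j <;>
    simp [J3, Matrix.mul_apply, Fin.sum_univ_three, Matrix.one_apply, vecHead, vecTail]

lemma herm_eval (X Y : C3) : herm J3 X Y =
    (starRingEnd ℂ) (Y 0) * X 0 + (starRingEnd ℂ) (Y 1) * X 1 - (starRingEnd ℂ) (Y 2) * X 2 := by
  simp [herm, J3, mulVec, dotProduct, Fin.sum_univ_three, vecHead, vecTail]
  ring

lemma box_eval (a b : C3) : box J3 a b =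
    ![(starRingEnd ℂ) (a 1) * (starRingEnd ℂ) (b 2) - (starRingEnd ℂ) (a 2) * (starRingEnd ℂ) (b 1),
      (starRingEnd ℂ) (a 2) * (starRingEnd ℂ) (b 0) - (starRingEnd ℂ) (a 0) * (starRingEnd ℂ) (b 2),
      -((starRingEnd ℂ) (a 0) * (starRingEnd ℂ) (b 1) - (starRingEnd ℂ) (a 1) * (starRingEnd ℂ) (b 0))] := by
  rw [box, J3_inv]
  funext i
  fin_cases i <;>
    simp [J3, crossProduct, mulVec, dotProduct, Fin.sum_univ_three, vecHead, vecTail]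

lemma vec3_ext {v w : C3} (h0 : v 0 = w 0) (h1 : v 1 = w 1) (h2 : v 2 = w 2) : v = w := by
  funext j
  fin_cases j
  · exact h0
  · exact h1
  · exact h2

/-- The polar ℂ-circles of two non-proportional positive-type points x, y meet iff x ⊠ y is
a null vector, and in that case the intersection is exactly the projective point of x ⊠ y:
a common point of the two ℂ-circles is a nonzero null vector orthogonal to both x and y. -/
theorem stmt12 (x y : C3) (hx : 0 < (herm J3 x x).re) (hy : 0 < (herm J3 y y).re)
    (hxy : ¬ ∃ l : ℂ, y = l • x) :
    ((∃ v : C3, v ≠ 0 ∧ herm J3 v v = 0 ∧ herm J3 v x = 0 ∧ herm J3 v y = 0) ↔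
      herm J3 (box J3 x y) (box J3 x y) = 0) ∧
    (∀ v : C3, v ≠ 0 → herm J3 v v = 0 → herm J3 v x = 0 → herm J3 v y = 0 →
      ∃ l : ℂ, l ≠ 0 ∧ v = l • box J3 x y) := by
  obtain ⟨W0, W1, W2, hW0, hW1, hW2⟩ :
      ∃ W0 W1 W2 : ℂ,
        W0 = (starRingEnd ℂ) (x 1) * (starRingEnd ℂ) (y 2) - (starRingEnd ℂ) (x 2) * (starRingEnd ℂ) (y 1) ∧
        W1 = (starRingEnd ℂ) (x 2) * (starRingEnd ℂ) (y 0) - (starRingEnd ℂ) (x 0) * (starRingEnd ℂ) (y 2) ∧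
        W2 = (starRingEnd ℂ) (x 0) * (starRingEnd ℂ) (y 1) - (starRingEnd ℂ) (x 1) * (starRingEnd ℂ) (y 0) :=
    ⟨_, _, _, rfl, rfl, rfl⟩
  have hbox : box J3 x y = ![W0, W1, -W2] := by
    rw [box_eval, hW0, hW1, hW2]
  have hb0 : box J3 x y 0 = W0 := by rw [hbox]; simp
  have hb1 : box J3 x y 1 = W1 := by rw [hbox]; simp
  have hb2 : box J3 x y 2 = -W2 := by rw [hbox]; simp
  have hx0 : x ≠ 0 := by
    rintro rfl
    simp [herm_eval] at hx
  have hxne : x 0 ≠ 0 ∨ x 1 ≠ 0 ∨ x 2 ≠ 0 := by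
    by_contra hcon
    push_neg at hcon
    exact hx0 (vec3_ext hcon.1 hcon.2.1 hcon.2.2)
  have hcross : ¬ (x 1 * y 2 - x 2 * y 1 = 0 ∧ x 2 * y 0 - x 0 * y 2 = 0 ∧
      x 0 * y 1 - x 1 * y 0 = 0) := by
    rintro ⟨m0, m1, m2⟩
    apply hxy
    rcases hxne with hk | hk | hk
    · refine ⟨y 0 / x 0, (vec3_ext ?_ ?_ ?_).symm⟩ <;>
        simp only [Pi.smul_apply, smul_eq_mul] <;>
        rw [div_mul_eq_mul_div, div_eq_iff hk]
      · linear_combination -m2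
      · linear_combination m1
    · refine ⟨y 1 / x 1, (vec3_ext ?_ ?_ ?_).symm⟩ <;>
        simp only [Pi.smul_apply, smul_eq_mul] <;>
        rw [div_mul_eq_mul_div, div_eq_iff hk]
      · linear_combination m2
      · linear_combination -m0
    · refine ⟨y 2 / x 2, (vec3_ext ?_ ?_ ?_).symm⟩ <;>
        simp only [Pi.smul_apply, smul_eq_mul] <;>
        rw [div_mul_eq_mul_div, div_eq_iff hk]
      · linear_combination -m1
      · linear_combination m0
  have hWne : ¬ (W0 = 0 ∧ W1 = 0 ∧ W2 = 0) := by
    rintro ⟨h0, h1, h2⟩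
    rw [hW0] at h0; rw [hW1] at h1; rw [hW2] at h2
    apply hcross
    have c0 := congrArg (starRingEnd ℂ) h0
    have c1 := congrArg (starRingEnd ℂ) h1
    have c2 := congrArg (starRingEnd ℂ) h2
    simp only [map_sub, _root_.map_mul, Complex.conj_conj, map_zero] at c0 c1 c2
    exact ⟨c0, c1, c2⟩
  have key : ∀ v : C3, v ≠ 0 → herm J3 v x = 0 → herm J3 v y = 0 →
      ∃ l : ℂ, l ≠ 0 ∧ v = l • box J3 x y := by
    intro v hv hvx hvy
    rw [herm_eval] at hvx hvy
    have m01 : v 0 * W1 = v 1 * W0 := by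
      linear_combination (-((starRingEnd ℂ) (y 2))) * hvx + (starRingEnd ℂ) (x 2) * hvy +
        v 0 * hW1 - v 1 * hW0
    have m02 : v 0 * W2 = -(v 2) * W0 := by
      linear_combination (starRingEnd ℂ) (y 1) * hvx - (starRingEnd ℂ) (x 1) * hvy +
        v 0 * hW2 + v 2 * hW0
    have m12 : v 1 * W2 = -(v 2) * W1 := by
      linear_combination (-((starRingEnd ℂ) (y 0))) * hvx + (starRingEnd ℂ) (x 0) * hvy +
        v 1 * hW2 + v 2 * hW1
    by_cases h0 : W0 = 0
    · by_cases h1 : W1 = 0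
      · have h2 : W2 ≠ 0 := fun h => hWne ⟨h0, h1, h⟩
        have hv2 : v 2 ≠ 0 := by
          intro hz
          refine hv (vec3_ext ?_ ?_ hz)
          · have h : v 0 * W2 = 0 := by rw [m02, hz]; ring
            simpa [h2] using mul_eq_zero.mp h
          · have h : v 1 * W2 = 0 := by rw [m12, hz]; ring
            simpa [h2] using mul_eq_zero.mp h
        refine ⟨-(v 2) / W2, by simp [hv2, h2], ?_⟩
        refine vec3_ext ?_ ?_ ?_ <;>
          simp only [Pi.smul_apply, smul_eq_mul, hb0, hb1, hb2] <;>
          rw [div_mul_eq_mul_div, eq_div_iff h2]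
        · linear_combination m02
        · linear_combination m12
        · ring
      · have hv1 : v 1 ≠ 0 := by
          intro hz
          refine hv (vec3_ext ?_ hz ?_)
          · have h : v 0 * W1 = 0 := by rw [m01, hz]; ring
            simpa [h1] using mul_eq_zero.mp h
          · have h : -(v 2) * W1 = 0 := by rw [← m12, hz]; ring
            have := mul_eq_zero.mp h
            simpa [h1, neg_eq_zero] using this
        refine ⟨v 1 / W1, by simp [hv1, h1], ?_⟩
        refine vec3_ext ?_ ?_ ?_ <;>
          simp only [Pi.smul_apply, smul_eq_mul, hb0, hb1, hb2] <;>
          rw [div_mul_eq_mul_div, eq_div_iff h1]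
        · linear_combination m01
        · linear_combination m12
    · have hv0 : v 0 ≠ 0 := by
        intro hz
        refine hv (vec3_ext hz ?_ ?_)
        · have h : v 1 * W0 = 0 := by rw [← m01, hz]; ring
          simpa [h0] using mul_eq_zero.mp h
        · have h : -(v 2) * W0 = 0 := by rw [← m02, hz]; ring
          have := mul_eq_zero.mp h
          simpa [h0, neg_eq_zero] using this
      refine ⟨v 0 / W0, by simp [hv0, h0], ?_⟩
      refine vec3_ext ?_ ?_ ?_ <;>
        simp only [Pi.smul_apply, smul_eq_mul, hb0, hb1, hb2] <;>
        rw [div_mul_eq_mul_div, eq_div_iff h0]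
      · linear_combination -m01
      · linear_combination m02
  refine ⟨⟨?_, ?_⟩, fun v hv _ hvx hvy => key v hv hvx hvy⟩
  · rintro ⟨v, hv, hvv, hvx, hvy⟩
    obtain ⟨l, hl, rfl⟩ := key v hv hvx hvy
    rw [herm_eval] at hvv ⊢
    simp only [Pi.smul_apply, smul_eq_mul, _root_.map_mul] at hvv
    have hlc : l * (starRingEnd ℂ) l ≠ 0 :=
      mul_ne_zero hl (by simpa using hl)
    have hmm : l * (starRingEnd ℂ) l *
        ((starRingEnd ℂ) (box J3 x y 0) * box J3 x y 0 +
         (starRingEnd ℂ) (box J3 x y 1) * box J3 x y 1 -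
         (starRingEnd ℂ) (box J3 x y 2) * box J3 x y 2) = 0 := by
      linear_combination hvv
    exact (mul_eq_zero.mp hmm).resolve_left hlc
  · intro h
    refine ⟨box J3 x y, ?_, h, ?_, ?_⟩
    · intro h0
      apply hWne
      refine ⟨?_, ?_, ?_⟩
      · rw [← hb0, h0]; rfl
      · rw [← hb1, h0]; rfl
      · rw [← neg_eq_zero, ← hb2, h0]; rfl
    · rw [herm_eval, hb0, hb1, hb2]
      linear_combination (starRingEnd ℂ) (x 0) * hW0 + (starRingEnd ℂ) (x 1) * hW1 +
        (starRingEnd ℂ) (x 2) * hW2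
    · rw [herm_eval, hb0, hb1, hb2]
      linear_combination (starRingEnd ℂ) (y 0) * hW0 + (starRingEnd ℂ) (y 1) * hW1 +
        (starRingEnd ℂ) (y 2) * hW2
end
end

section
/- Let L_α(s) = diag(e^{sα}, e^{s(ᾱ − α)}, e^{−sᾱ}) be a one-parameter loxodromic subgroup in the Siegel model (α ∈ ℂ*, |Re α| part nonzero). The orbit s ↦ L_α(s)·p of a boundary point p with Heisenberg coordinates [z, t] is horizontal (tangent to the contact distribution at every point, equivalently ⟨γ'(s), γ(s)⟩ = 0 for the standard lifts) if and only if t = 3 |z|² Im(α)/Re(α). -/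
open Matrix Complex

noncomputable section

/-- The one-parameter loxodromic subgroup L_α(s) = diag(e^{sα}, e^{s(ᾱ−α)}, e^{−sᾱ}). -/
def Lmat (α : ℂ) (s : ℝ) : Matrix (Fin 3) (Fin 3) ℂ :=
  Matrix.diagonal ![Complex.exp ((s : ℂ) * α),
    Complex.exp ((s : ℂ) * ((starRingEnd ℂ) α - α)),
    Complex.exp (-(s : ℂ) * (starRingEnd ℂ) α)]

/-! The matrices `L_α(s) = exp (s D)`, `D = diag(α, ᾱ - α, -ᾱ)`, are diagonal and preserve the
Siegel form, so `γ'(s) = L_α(s) (D p)` and `⟨γ'(s), γ(s)⟩ = ⟨D p, p⟩` does not depend on `s`.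
A direct computation gives `⟨D p, p⟩ = i (2 t Re α - 6 |z|² Im α)`. -/

open ComplexConjugate

def Lgen (α : ℂ) : C3 := ![α, conj α - α, -conj α]

lemma Lmat_eq_diagonal (α : ℂ) (s : ℝ) :
    Lmat α s = diagonal fun i => exp (s * Lgen α i) := by
  rw [Lmat]
  congr 1
  ext i
  fin_cases i <;> simp [Lgen]

lemma herm_HS_apply (X Y : C3) :
    herm HS X Y = conj (Y 0) * X 2 + 2 * conj (Y 1) * X 1 + conj (Y 2) * X 0 := by
  simp only [herm, HS, dotProduct, mulVec, Fin.sum_univ_three, Pi.star_apply, RCLike.star_def, of_apply,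
    cons_val', cons_val_fin_one, cons_val_zero, cons_val_one, cons_val, zero_mul, add_zero, one_mul, zero_add]
  ring

lemma herm_HS_diagonal_mulVec {d : C3} (h02 : conj (d 0) * d 2 = 1) (h11 : conj (d 1) * d 1 = 1)
    (h20 : conj (d 2) * d 0 = 1) (X Y : C3) :
    herm HS (diagonal d *ᵥ X) (diagonal d *ᵥ Y) = herm HS X Y := by
  simp only [herm_HS_apply, mulVec_diagonal, map_mul]
  linear_combination (conj (Y 0) * X 2) * h02 + (2 * conj (Y 1) * X 1) * h11 +
    (conj (Y 2) * X 0) * h20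

lemma conj_exp_mul_exp_neg_conj (s : ℝ) (w : ℂ) :
    conj (exp (s * w)) * exp (s * -conj w) = 1 := by
  rw [← exp_conj, ← exp_add]
  simp

lemma herm_HS_Lmat_mulVec (α : ℂ) (s : ℝ) (X Y : C3) :
    herm HS (Lmat α s *ᵥ X) (Lmat α s *ᵥ Y) = herm HS X Y := by
  rw [Lmat_eq_diagonal]
  refine herm_HS_diagonal_mulVec ?_ ?_ ?_ X Y
  · simpa [Lgen] using conj_exp_mul_exp_neg_conj s α
  · simpa [Lgen] using conj_exp_mul_exp_neg_conj s (conj α - α)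
  · simpa [Lgen] using conj_exp_mul_exp_neg_conj s (-conj α)

lemma deriv_Lmat_mulVec (α : ℂ) (v : C3) (s : ℝ) :
    (fun i => deriv (fun s' : ℝ => (Lmat α s' *ᵥ v) i) s) = Lmat α s *ᵥ (Lgen α * v) := by
  ext i
  simp only [Lmat_eq_diagonal, mulVec_diagonal, Pi.mul_apply]
  have h := ((((hasDerivAt_id (s : ℂ)).mul_const (Lgen α i)).cexp).comp_ofReal).mul_const (v i)
  simp only [id_eq, one_mul] at h
  rw [h.deriv]
  ring

lemma herm_HS_Lgen_mul_heisPt (α z : ℂ) (t : ℝ) :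
    herm HS (Lgen α * heisPt z t) (heisPt z t) = I * (2 * t * α.re - 6 * normSq z * α.im) := by
  apply Complex.ext <;> simp [herm_HS_apply, Lgen, heisPt, normSq_apply] <;> ring

/-- The orbit s ↦ L_α(s)·p of the boundary point p = [z,t] is horizontal, i.e.
⟨γ'(s), γ(s)⟩ = 0 for all s (with standard lifts), iff t = 3|z|² Im(α)/Re(α). -/
theorem stmt18 (α : ℂ) (hα : α.re ≠ 0) (z : ℂ) (t : ℝ) :
    (∀ s : ℝ,
      herm HS (fun i => deriv (fun s' : ℝ => (Lmat α s').mulVec (heisPt z t) i) s)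
        ((Lmat α s).mulVec (heisPt z t)) = 0) ↔
      t = 3 * Complex.normSq z * α.im / α.re := by
  simp only [deriv_Lmat_mulVec, herm_HS_Lmat_mulVec, herm_HS_Lgen_mul_heisPt, forall_const]
  rw [eq_div_iff hα, mul_eq_zero, or_iff_right I_ne_zero]
  norm_cast
  constructor <;> intro h <;> linarith
end
end
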